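/- arXiv:2103.08015 — 3 statements merged into one kernel-verified Lean document; each statement's English description precedes it below -/
import Mathlib

section
/- For every integer n ≥ 1 and every real x, F_{2n}(x) − (2x²−1)·F_{2n-2}(x) = x·T_{2n-2}(x) − (3x²−4)·Σ_{k=1}^{n-1} F_{2k}(x)·T_{2(n-k-1)}(x). -/
/-- Chebyshev polynomials of the first kind. -/
def T : ℕ → ℝ → ℝ
  | 0, _ => 1
  | 1, x => x
  | (n+2), x => 2*x*T (n+1) x - T n x

/-- Chebyshev polynomials of the second kind. -/
def U : ℕ → ℝ → ℝ
  | 0, _ => 1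
  | 1, x => 2*x
  | (n+2), x => 2*x*U (n+1) x - U n x

/-- Fibonacci polynomials. -/
def F : ℕ → ℝ → ℝ
  | 0, _ => 0
  | 1, _ => 1
  | (n+2), x => x*F (n+1) x + F n x

/-- Balancing polynomials. -/
def B : ℕ → ℝ → ℝ
  | 0, _ => 0
  | 1, _ => 1
  | (n+2), x => 6*x*B (n+1) x - B n x

/-- Lucas-balancing polynomials. -/
def C : ℕ → ℝ → ℝ
  | 0, _ => 1
  | 1, x => 3*x
  | (n+2), x => 6*x*C (n+1) x - C n x

/-- Lucas numbers. -/
def lucas : ℕ → ℤ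
  | 0 => 2
  | 1 => 1
  | (n+2) => lucas (n+1) + lucas n

/-!
Writing `a m = F (2m) x` and `b m = T (2m) x`, both sequences satisfy second-order recurrences,
`a (m + 2) = (x² + 2) a (m + 1) - a m` and `b (m + 2) = (4x² - 2) b (m + 1) - b m`. Convolving a
solution of the first recurrence that vanishes at `0` with any sequence gives a solution of the same
recurrence up to an inhomogeneous term; for the convolution `∑ a i b j` this term is
`x b (m + 1)`, so both sides of the identity satisfy `u (m + 2) = (x² + 2) u (m + 1) - u m`,
and it suffices to compare them at `m = 0, 1`.
-/

open Finset

lemma F_two_mul_add_two (k : ℕ) (x : ℝ) :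
    F (2 * (k + 2)) x = (x ^ 2 + 2) * F (2 * (k + 1)) x - F (2 * k) x := by
  rw [show 2 * (k + 2) = 2 * k + 2 + 2 by ring, show 2 * (k + 1) = 2 * k + 1 + 1 by ring]
  simp only [F]
  ring

lemma T_two_mul_add_two (k : ℕ) (x : ℝ) :
    T (2 * (k + 2)) x = (4 * x ^ 2 - 2) * T (2 * (k + 1)) x - T (2 * k) x := by
  rw [show 2 * (k + 2) = 2 * k + 2 + 2 by ring, show 2 * (k + 1) = 2 * k + 1 + 1 by ring]
  simp only [T]
  ring

lemma eq_of_two_step_recurrence {R : Type*} [Ring R] {p : R} {u v : ℕ → R}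
    (hu : ∀ m, u (m + 2) = p * u (m + 1) - u m) (hv : ∀ m, v (m + 2) = p * v (m + 1) - v m)
    (h₀ : u 0 = v 0) (h₁ : u 1 = v 1) : u = v := by
  funext m
  induction m using Nat.twoStepInduction with
  | zero => exact h₀
  | one => exact h₁
  | more m ih₀ ih₁ => rw [hu, hv, ih₀, ih₁]

lemma sum_antidiagonal_add_two_of_recurrence {R : Type*} [CommRing R] {p : R} {a : ℕ → R}
    (ha : ∀ k, a (k + 2) = p * a (k + 1) - a k) (ha₀ : a 0 = 0) (b : ℕ → R) (m : ℕ) :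
    ∑ ij ∈ antidiagonal (m + 2), a ij.1 * b ij.2 =
      p * ∑ ij ∈ antidiagonal (m + 1), a ij.1 * b ij.2
        - ∑ ij ∈ antidiagonal m, a ij.1 * b ij.2 + a 1 * b (m + 1) := by
  simp only [Nat.sum_antidiagonal_succ, ha, ha₀, zero_mul, zero_add, sub_mul, sum_sub_distrib,
    mul_sum, mul_assoc]
  ring

lemma F_two_mul_succ_sub (m : ℕ) (x : ℝ) :
    F (2 * (m + 1)) x - (2 * x ^ 2 - 1) * F (2 * m) x =
      x * T (2 * m) x
        - (3 * x ^ 2 - 4) * ∑ ij ∈ antidiagonal m, F (2 * ij.1) x * T (2 * ij.2) x := by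
  have hconv := sum_antidiagonal_add_two_of_recurrence (a := fun k ↦ F (2 * k) x)
    (fun k ↦ F_two_mul_add_two k x) rfl (fun k ↦ T (2 * k) x)
  have hF₂ : F (2 * 1) x = x := by simp [F]
  refine congrFun (eq_of_two_step_recurrence (p := x ^ 2 + 2)
    (u := fun m ↦ F (2 * (m + 1)) x - (2 * x ^ 2 - 1) * F (2 * m) x)
    (v := fun m ↦ x * T (2 * m) x -
      (3 * x ^ 2 - 4) * ∑ ij ∈ antidiagonal m, F (2 * ij.1) x * T (2 * ij.2) x)
    (fun m ↦ ?_) (fun m ↦ ?_) ?_ ?_) m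
  · simp only [F_two_mul_add_two]
    ring
  · -- the inhomogeneous term `x * (3 * x ^ 2 - 4) * T (2 * (m + 1)) x` of the convolution
    -- cancels against the gap `(4 * x ^ 2 - 2) - (x ^ 2 + 2)` between the two recurrences
    simp only [hconv, T_two_mul_add_two, hF₂]
    ring
  · simp [F, T]
  · simp only [F, T, Nat.sum_antidiagonal_succ, HasAntidiagonal.antidiagonal_zero, sum_singleton]
    ring

theorem stmt4 (n : ℕ) (hn : 1 ≤ n) (x : ℝ) :
    F (2*n) x - (2*x^2 - 1) * F (2*n-2) x =
      x * T (2*n-2) x - (3*x^2 - 4) * ∑ k ∈ Finset.Icc 1 (n-1), F (2*k) x * T (2*(n-k-1)) x := by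
  obtain ⟨m, rfl⟩ : ∃ m, n = m + 1 := ⟨n - 1, by omega⟩
  have hsum : ∑ k ∈ Icc 1 m, F (2 * k) x * T (2 * (m + 1 - k - 1)) x =
      ∑ ij ∈ antidiagonal m, F (2 * ij.1) x * T (2 * ij.2) x := by
    rw [Nat.sum_antidiagonal_eq_sum_range_succ (fun i j ↦ F (2 * i) x * T (2 * j) x),
      sum_range_eq_add_Ico _ m.succ_pos, ← Ico_add_one_right_eq_Icc]
    simp only [F, zero_mul, zero_add]
    exact sum_congr rfl fun k _ ↦ by rw [Nat.sub_right_comm, Nat.add_sub_cancel]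
  rw [Nat.add_sub_cancel, hsum, show 2 * (m + 1) - 2 = 2 * m by omega]
  exact F_two_mul_succ_sub m x
end

section
/- For every integer n ≥ 1 and every real x, F_{2n}(x) + F_{2n-2}(x) = x·U_{2n-2}(x) − (3x²−4)·Σ_{k=1}^{n-1} F_{2k}(x)·U_{2(n-k-1)}(x). -/
/-! With `a m = F (2m) x` and `u m = U (2m) x`, both sequences satisfy three-term recurrences
`a (m+2) = p a (m+1) - a m`, `u (m+2) = q u (m+1) - u m` with `p = x² + 2`, `q = 4x² - 2`, and
`q - p = 3x² - 4`. Their generating functions are `N_a / P` and `N_u / Q` with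
`P = 1 - p t + t²`, `Q = 1 - q t + t²`, so `P - Q = (q - p) t` gives
`(q - p) t · (N_a / P) (N_u / Q) = N_a (N_u / Q) - N_u (N_a / P)`. Reading off coefficients turns
this into an identity for the Cauchy product of `a` and `u`, which here (`N_a = x t`, `N_u = 1 + t`)
is the theorem. -/

open Finset

section Recurrence

variable {R : Type*} [CommRing R]

lemma add_four_eq_of_add_two_eq {s : ℕ → R} {c d : R}
    (hs : ∀ n, s (n + 2) = c * s (n + 1) + d * s n) (n : ℕ) :
    s (n + 4) = (c ^ 2 + 2 * d) * s (n + 2) - d ^ 2 * s n := by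
  linear_combination hs (n + 2) + c * hs (n + 1) - d * hs n

def cauchyProduct (a u : ℕ → R) (m : ℕ) : R :=
  ∑ ij ∈ antidiagonal m, a ij.1 * u ij.2

variable {p q : R} {a u : ℕ → R}

lemma cauchyProduct_add_two (hu : ∀ m, u (m + 2) = q * u (m + 1) - u m) (m : ℕ) :
    cauchyProduct a u (m + 2) = q * cauchyProduct a u (m + 1) - cauchyProduct a u m
      + a (m + 2) * u 0 + a (m + 1) * (u 1 - q * u 0) := by
  have hshift : ∑ ij ∈ antidiagonal m, a ij.1 * u (ij.2 + 1)
      = cauchyProduct a u (m + 1) - a (m + 1) * u 0 := by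
    rw [cauchyProduct, Nat.sum_antidiagonal_succ']
    ring
  have hshift₂ : ∑ ij ∈ antidiagonal m, a ij.1 * u (ij.2 + 2)
      = q * ∑ ij ∈ antidiagonal m, a ij.1 * u (ij.2 + 1) - cauchyProduct a u m := by
    simp only [hu, cauchyProduct, mul_sum, ← sum_sub_distrib]
    exact sum_congr rfl fun _ _ ↦ by ring
  rw [cauchyProduct, Nat.sum_antidiagonal_succ', Nat.sum_antidiagonal_succ', hshift₂, hshift]
  ring

theorem sub_mul_cauchyProduct (ha : ∀ m, a (m + 2) = p * a (m + 1) - a m)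
    (hu : ∀ m, u (m + 2) = q * u (m + 1) - u m) :
    ∀ m, (q - p) * cauchyProduct a u m
      = a 0 * u (m + 1) + (a 1 - p * a 0) * u m - u 0 * a (m + 1) - (u 1 - q * u 0) * a m
  | 0 => by
    rw [cauchyProduct, Nat.antidiagonal_zero, sum_singleton]
    ring
  | 1 => by
    simp only [cauchyProduct, Nat.sum_antidiagonal_succ', Nat.antidiagonal_zero, sum_singleton,
      Nat.reduceAdd, ha 0, hu 0]
    ring
  | m + 2 => by
    rw [cauchyProduct_add_two hu]
    linear_combination q * sub_mul_cauchyProduct ha hu (m + 1) - sub_mul_cauchyProduct ha hu m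
      - a 0 * hu (m + 1) - (a 1 - p * a 0) * hu m + u 0 * ha (m + 1) + (u 1 - q * u 0) * ha m

end Recurrence

lemma F_add_two (n : ℕ) (x : ℝ) : F (n + 2) x = x * F (n + 1) x + 1 * F n x := by
  rw [F, one_mul]

lemma U_add_two (n : ℕ) (x : ℝ) : U (n + 2) x = 2 * x * U (n + 1) x + -1 * U n x := by
  rw [U]; ring

lemma F_even_add_two (x : ℝ) (m : ℕ) :
    F (2 * (m + 2)) x = (x ^ 2 + 2) * F (2 * (m + 1)) x - F (2 * m) x := by
  have := add_four_eq_of_add_two_eq (s := (F · x)) (fun n ↦ F_add_two n x) (2 * m)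
  simp only [mul_add] at this ⊢
  linear_combination this

lemma U_even_add_two (x : ℝ) (m : ℕ) :
    U (2 * (m + 2)) x = (4 * x ^ 2 - 2) * U (2 * (m + 1)) x - U (2 * m) x := by
  have := add_four_eq_of_add_two_eq (s := (U · x)) (fun n ↦ U_add_two n x) (2 * m)
  simp only [mul_add] at this ⊢
  linear_combination this

theorem stmt5 (n : ℕ) (hn : 1 ≤ n) (x : ℝ) :
    F (2*n) x + F (2*n-2) x =
      x * U (2*n-2) x - (3*x^2 - 4) * ∑ k ∈ Finset.Icc 1 (n-1), F (2*k) x * U (2*(n-k-1)) x := by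
  obtain ⟨m, rfl⟩ := Nat.exists_eq_add_of_le' hn
  have key := sub_mul_cauchyProduct (a := fun k ↦ F (2 * k) x) (u := fun k ↦ U (2 * k) x)
    (F_even_add_two x) (U_even_add_two x) m
  have hsum : cauchyProduct (fun k ↦ F (2 * k) x) (fun k ↦ U (2 * k) x) m
      = ∑ k ∈ Icc 1 m, F (2 * k) x * U (2 * (m + 1 - k - 1)) x := by
    rw [cauchyProduct, Nat.sum_antidiagonal_eq_sum_range_succ (fun i j ↦ F (2 * i) x * U (2 * j) x),
      sum_range_eq_add_Ico _ m.succ_pos, Nat.succ_eq_add_one, Ico_add_one_right_eq_Icc]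
    simp only [F, zero_mul, zero_add]
    exact sum_congr rfl fun k _ ↦ by congr 3; omega
  simp only [Nat.add_sub_cancel, show 2 * (m + 1) - 2 = 2 * m by omega, ← hsum]
  simp only [F, U, zero_mul, mul_zero, mul_one, one_mul, zero_add, add_zero, sub_zero] at key
  linear_combination key
end

section
/- For every integer n ≥ 1 and every real x, F_{2n+1}(x) = U_n(x) − U_{n-1}(x) + (x²−2x+2)·Σ_{k=0}^{n-1} U_{n-1-k}(x)·F_{2k+1}(x). -/
/-! With `c = x² - 2x + 2`, the odd-indexed Fibonacci polynomials `f k = F (2k+1) x` satisfy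
`f (k+2) = (2x + c) f (k+1) - f k`, so their generating function `Φ` satisfies
`(1 - (2x + c) t + t²) Φ = 1 - t`, while that of the `U k x` is `Ψ = 1 / (1 - 2x t + t²)`.
Hence `Φ = (1 - t) Ψ + c t Ψ Φ`; comparing coefficients of `t ^ n` gives the identity. -/

open PowerSeries

section

variable {R : Type*} [CommRing R]

theorem PowerSeries.mul_mk_of_recurrence {a : ℕ → R} {r : R}
    (h : ∀ n, a (n + 2) = r * a (n + 1) - a n) :
    (1 - C r * X + X ^ 2) * mk a = C (a 0) + C (a 1 - r * a 0) * X := by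
  ext (_ | _ | n)
  · simp
  · simp [sub_mul, add_mul, mul_assoc, coeff_X_pow_mul']
  · simp [sub_mul, add_mul, mul_assoc, coeff_X_pow_mul', h]

theorem succ_eq_sub_add_mul_sum_of_recurrences {u f : ℕ → R} {s c : R}
    (hu0 : u 0 = 1) (hu1 : u 1 = s) (hu : ∀ n, u (n + 2) = s * u (n + 1) - u n)
    (hf0 : f 0 = 1) (hf1 : f 1 = s + c - 1) (hf : ∀ n, f (n + 2) = (s + c) * f (n + 1) - f n)
    (n : ℕ) :
    f (n + 1) = u (n + 1) - u n + c * ∑ k ∈ Finset.range (n + 1), u (n - k) * f k := by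
  have hU : (1 - C s * X + X ^ 2) * mk u = 1 := by
    simpa [hu0, hu1] using mul_mk_of_recurrence hu
  have hF : (1 - (C s + C c) * X + X ^ 2) * mk f = 1 - X := by
    rw [← map_add, mul_mk_of_recurrence hf, hf0, hf1]
    simp [← sub_eq_add_neg]
  have key : mk f = (1 - X) * mk u + C c * X * (mk u * mk f) := by
    linear_combination (-mk f) * hU + mk u * hF
  have hconv : coeff n (mk u * mk f) = ∑ k ∈ Finset.range (n + 1), u (n - k) * f k := by
    rw [coeff_mul, ← Finset.Nat.sum_antidiagonal_swap]
    simpa using Finset.Nat.sum_antidiagonal_eq_sum_range_succ (fun i j => u j * f i) n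
  simpa [sub_mul, mul_assoc, coeff_succ_X_mul, hconv] using congrArg (coeff (n + 1)) key

end

theorem F_add_four (m : ℕ) (x : ℝ) : F (m + 4) x = (x ^ 2 + 2) * F (m + 2) x - F m x := by
  rw [F, F, F]
  ring

theorem stmt8 (n : ℕ) (hn : 1 ≤ n) (x : ℝ) :
    F (2*n+1) x =
      U n x - U (n-1) x + (x^2 - 2*x + 2) * ∑ k ∈ Finset.range n, U (n-1-k) x * F (2*k+1) x := by
  obtain ⟨m, rfl⟩ := Nat.exists_eq_add_of_le' hn
  have hF1 : F 3 x = 2 * x + (x ^ 2 - 2 * x + 2) - 1 := by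
    simp only [F]
    ring
  have hc : 2 * x + (x ^ 2 - 2 * x + 2) = x ^ 2 + 2 := by ring
  simpa using succ_eq_sub_add_mul_sum_of_recurrences (s := 2 * x) (c := x ^ 2 - 2 * x + 2)
    (u := fun k => U k x) (f := fun k => F (2 * k + 1) x) rfl rfl (fun _ => rfl) rfl hF1
    (fun k => by simpa [hc, mul_add, add_assoc] using F_add_four (2 * k + 1) x) m
end
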